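/- arXiv:2312.14655 — 4 statements merged into one kernel-verified Lean document; each statement's English description precedes it below -/
import Mathlib

section
/- If q is a non-constant polynomial over ℂ, then every root of its derivative q' lies in the convex hull of the set of roots of q. -/
open MeasureTheory Metric Filter Polynomial Topology Asymptotics
open scoped Classical ENNReal

/-- Logarithmic potential of a measure, `p_μ(z) = ∫ log|z-w| dμ(w)`. -/
noncomputable def logPotential (μ : Measure ℂ) (z : ℂ) : ℝ :=
  ∫ w, Real.log (‖z - w‖) ∂μ

/-- Logarithmic energy `I(μ) = ∫ p_μ dμ`. -/
noncomputable def logEnergy (μ : Measure ℂ) : ℝ :=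
  ∫ z, logPotential μ z ∂μ

/-- A compact set is non-polar if it carries a probability measure of finite logarithmic
energy (equivalently, positive logarithmic capacity). -/
def NonPolar (K : Set ℂ) : Prop :=
  ∃ μ : Measure ℂ, IsProbabilityMeasure μ ∧ μ Kᶜ = 0 ∧
    Integrable (fun p : ℂ × ℂ => Real.log (‖p.1 - p.2‖)) (μ.prod μ)

/-- `ω` is the equilibrium measure of `K`: a probability measure supported on `K`,
of finite energy, maximizing the logarithmic energy (Ransford's sign convention). -/
structure IsEquilibriumMeasure (K : Set ℂ) (ω : Measure ℂ) : Prop where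
  prob : IsProbabilityMeasure ω
  supp : ω Kᶜ = 0
  finite_energy :
    Integrable (fun p : ℂ × ℂ => Real.log (‖p.1 - p.2‖)) (ω.prod ω)
  maximal : ∀ ν : Measure ℂ, IsProbabilityMeasure ν → ν Kᶜ = 0 →
    Integrable (fun p : ℂ × ℂ => Real.log (‖p.1 - p.2‖)) (ν.prod ν) →
    logEnergy ν ≤ logEnergy ω

/-- Green's function of `Ω = ℂ \ K` with pole at infinity, `g_Ω = p_ω − I(ω)`,
where `ω` is the equilibrium measure of `K`. -/
noncomputable def greenFn (ω : Measure ℂ) (z : ℂ) : ℝ :=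
  logPotential ω z - logEnergy ω

/-- Root distribution of a polynomial: average of Dirac masses at its roots
with multiplicity. -/
noncomputable def rootDist (q : Polynomial ℂ) : Measure ℂ :=
  ((q.natDegree : ℝ≥0∞))⁻¹ • (q.roots.map Measure.dirac).sum

/-- `K`-regularity of a sequence of polynomials: `(1/n_k) log|q_k| → g`
uniformly outside some disk. -/
def KRegular (q : ℕ → Polynomial ℂ) (g : ℂ → ℝ) : Prop :=
  ∃ R > (0:ℝ), TendstoUniformlyOn
    (fun k z => ((q k).natDegree : ℝ)⁻¹ * Real.log (‖(q k).eval z‖))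
    g atTop (closedBall (0:ℂ) R)ᶜ

/-- The sequence `(q_k)` centers on the compact set `C`. -/
def Centers (q : ℕ → Polynomial ℂ) (C : Set ℂ) : Prop :=
  ∃ N : ℕ,
    (∃ R > (0:ℝ), ∀ k ≥ N, ∀ z : ℂ, (q k).IsRoot z → z ∈ ball (0:ℂ) R) ∧
    (∀ L : Set ℂ, IsClosed L → Disjoint L C →
      ∃ M : ℕ, 0 < M ∧ ∀ k ≥ N, (((q k).roots).filter (· ∈ L)).card ≤ M)

/-- The sequence `(q_k)` weakly centers on the compact set `C`. -/
def WeaklyCenters (q : ℕ → Polynomial ℂ) (C : Set ℂ) : Prop :=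
  (∃ N : ℕ, ∃ R > (0:ℝ), ∀ k ≥ N, ∀ z : ℂ, (q k).IsRoot z → z ∈ ball (0:ℂ) R) ∧
  (∀ L : Set ℂ, IsClosed L → Disjoint L C →
    Tendsto (fun k => rootDist (q k) L) atTop (nhds 0))

/-- Weak-star convergence of measures, tested against bounded continuous functions. -/
def WeakStarTendsto (μ : ℕ → Measure ℂ) (ν : Measure ℂ) : Prop :=
  ∀ f : BoundedContinuousFunction ℂ ℝ,
    Tendsto (fun k => ∫ z, f z ∂(μ k)) atTop (nhds (∫ z, f z ∂ν))

/-- Gauss–Lucas: every root of `q'` lies in the convex hull of the roots of `q`. -/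
theorem stmt_0 (q : Polynomial ℂ) (hq : 1 ≤ q.degree) (z : ℂ)
    (hz : (Polynomial.derivative q).IsRoot z) :
    z ∈ convexHull ℝ {w : ℂ | q.IsRoot w} := by
  have hdeg : 0 < q.degree := zero_lt_one.trans_le hq
  rw [eq_centerMass_of_eval_derivative_eq_zero hdeg hz]
  exact Finset.centerMass_mem_convexHull _ (fun w _ ↦ derivRootWeight_nonneg q z w)
    (sum_derivRootWeight_pos hdeg z) fun w hw ↦ isRoot_of_mem_roots (Multiset.mem_toFinset.1 hw)
end

section
/- Let P be a polynomial of degree n > 1 with Julia set J(P) and equilibrium measure ω on its filled Julia set. If L ⊆ J(P) is compact with P(L) = L, then either L = J(P) or ω(L) = 0. -/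
open MeasureTheory Metric Filter Polynomial Topology Asymptotics
open scoped Classical ENNReal

/-- The filled Julia set of a polynomial: points with bounded forward orbit. -/
def filledJulia (P : Polynomial ℂ) : Set ℂ :=
  {z : ℂ | Bornology.IsBounded (Set.range fun k : ℕ => (fun w => P.eval w)^[k] z)}

/-!
`L ⊆ P⁻¹(L)` because `P(L) = L`, so the invariance of `ω` makes `L` invariant up to a null set,
and ergodicity forces `ω(L) ∈ {0, 1}`. If `ω(L) = 1`, the complement of the closed set `L` is an
open null set, which cannot meet `J(P) = supp ω`.
-/

namespace MeasureTheory

theorem MeasurePreserving.of_measure_preimage {α : Type*} [MeasurableSpace α] {μ : Measure α}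
    {f : α → α} (hf : Measurable f) (h : ∀ s, MeasurableSet s → μ (f ⁻¹' s) = μ s) :
    MeasurePreserving f μ μ :=
  ⟨hf, Measure.ext fun s hs => by rw [Measure.map_apply hf hs, h s hs]⟩

theorem PreErgodic.of_prob_eq_zero_or_one {α : Type*} [MeasurableSpace α] {μ : Measure α}
    [IsProbabilityMeasure μ] {f : α → α}
    (h : ∀ s, MeasurableSet s → f ⁻¹' s = s → μ s = 0 ∨ μ s = 1) : PreErgodic f μ where
  aeconst_set s hs hfs := Filter.eventuallyConst_set'.mpr <|
    (h s hs hfs).imp ae_eq_empty.mpr fun h1 => ae_eq_univ.mpr ((prob_compl_eq_zero_iff hs).mpr h1)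

theorem subset_of_measure_compl_eq_zero {X : Type*} [PseudoMetricSpace X] [MeasurableSpace X]
    {μ : Measure X} {s J : Set X} (hs : IsClosed s)
    (hJ : ∀ z ∈ J, ∀ r > (0 : ℝ), 0 < μ (ball z r)) (hsc : μ sᶜ = 0) : J ⊆ s := by
  intro z hzJ
  by_contra hzs
  obtain ⟨r, hr, hball⟩ := isOpen_iff.mp hs.isOpen_compl z hzs
  exact (hJ z hzJ r hr).ne' (measure_mono_null hball hsc)

end MeasureTheory

theorem stmt_8_general (P : Polynomial ℂ)
    (ω : Measure ℂ) [IsProbabilityMeasure ω]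
    (hsupp : ∀ z ∈ frontier (filledJulia P), ∀ r > (0:ℝ), 0 < ω (ball z r))
    (hinv : ∀ U : Set ℂ, MeasurableSet U → ω ((fun w => P.eval w) ⁻¹' U) = ω U)
    (herg : ∀ U : Set ℂ, MeasurableSet U →
      (fun w => P.eval w) ⁻¹' U = U → ω U = 0 ∨ ω U = 1)
    (L : Set ℂ) (hL : IsCompact L) (hLJ : L ⊆ frontier (filledJulia P))
    (hPL : (fun w => P.eval w) '' L = L) :
    L = frontier (filledJulia P) ∨ ω L = 0 := by
  have hPω : Ergodic (fun w => P.eval w) ω :=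
    ⟨.of_measure_preimage P.continuous.measurable hinv, .of_prob_eq_zero_or_one herg⟩
  rcases hPω.ae_empty_or_univ_of_image_ae_le hL.isClosed.measurableSet.nullMeasurableSet
    hPL.le.eventuallyLE with hnull | hfull
  · exact .inr (ae_eq_empty.mp hnull)
  · exact .inl <| hLJ.antisymm <|
      subset_of_measure_compl_eq_zero hL.isClosed hsupp (ae_eq_univ.mp hfull)

theorem stmt_8 (P : Polynomial ℂ) (hP : 1 < P.natDegree)
    (ω : Measure ℂ) [IsProbabilityMeasure ω]
    (hsupp0 : ω (frontier (filledJulia P))ᶜ = 0)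
    (hsupp : ∀ z ∈ frontier (filledJulia P), ∀ r > (0:ℝ), 0 < ω (ball z r))
    (hinv : ∀ U : Set ℂ, MeasurableSet U → ω ((fun w => P.eval w) ⁻¹' U) = ω U)
    (herg : ∀ U : Set ℂ, MeasurableSet U →
      (fun w => P.eval w) ⁻¹' U = U → ω U = 0 ∨ ω U = 1)
    (L : Set ℂ) (hL : IsCompact L) (hLJ : L ⊆ frontier (filledJulia P))
    (hPL : (fun w => P.eval w) '' L = L) :
    L = frontier (filledJulia P) ∨ ω L = 0 :=
  stmt_8_general P ω hsupp hinv herg L hL hLJ hPL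
end

section
/- Suppose (q_k) is a sequence of polynomials with degrees n_k → ∞, whose roots are uniformly contained in a disk D(0,R), and whose root distributions μ_k converge weak-star to a probability measure μ supported in the closed disk. If additionally (1/n_k) log|q_k(z)| converges for |z| > R to g(z) = p_ω(z) − I(ω) (the Green's function of ℂ \ K), where ω is the equilibrium measure of a compact non-polar set K ⊂ D(0,R), then (1/n_k) log|γ_k| → −I(ω), where γ_k is the leading coefficient of q_k, and p_μ = p_ω on {|z| > R}. -/
open MeasureTheory Metric Filter Polynomial Topology Asymptotics
open scoped Classical ENNReal

/-! For `R < |z|` the factorization of `q_k` over its roots gives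
`(1/n_k) log|q_k(z)| = (1/n_k) log|γ_k| + p_{μ_k}(z)`, and since `log|z - ·|` agrees on the
closed disk with a bounded continuous function, `p_{μ_k}(z) → p_μ(z)` by weak-star convergence.
So `(1/n_k) log|γ_k|` converges to `g(z) - p_μ(z)` for every `R < |z|`, which is therefore a
constant `c`. Both `p_ω` and `p_μ` are `log|z| + O(1/|z|)` at infinity, hence `c = -I(ω)`. -/

open scoped BoundedContinuousFunction

section DiracSum

variable {α E : Type*} [MeasurableSpace α] [MeasurableSingletonClass α] [NormedAddCommGroup E]

lemma integrable_multiset_sum_dirac (f : α → E) (s : Multiset α) :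
    Integrable f (s.map Measure.dirac).sum := by
  induction s using Multiset.induction with
  | empty => simp
  | cons a s ih => simpa using (integrable_dirac (by simp)).add_measure ih

lemma integral_multiset_sum_dirac [NormedSpace ℝ E] [CompleteSpace E] (f : α → E)
    (s : Multiset α) :
    ∫ x, f x ∂(s.map Measure.dirac).sum = (s.map f).sum := by
  induction s using Multiset.induction with
  | empty => simp
  | cons a s ih =>
    simp [integral_add_measure (integrable_dirac (by simp)) (integrable_multiset_sum_dirac f s), ih]

end DiracSum

-- For `natDegree = 0` both sides vanish, since `(0 : ℝ≥0∞)⁻¹ = ⊤` has `toReal` zero.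
lemma integral_rootDist (f : ℂ → ℝ) (q : ℂ[X]) :
    ∫ z, f z ∂rootDist q = (q.natDegree : ℝ)⁻¹ * (q.roots.map f).sum := by
  rw [rootDist, integral_smul_measure, integral_multiset_sum_dirac, ENNReal.toReal_inv,
    ENNReal.toReal_natCast, smul_eq_mul]

lemma log_norm_eval_eq_add_sum_log_norm_sub (q : ℂ[X]) {z : ℂ} (hz : q.eval z ≠ 0) :
    Real.log ‖q.eval z‖ =
      Real.log ‖q.leadingCoeff‖ + (q.roots.map fun r => Real.log ‖z - r‖).sum := by
  rw [(IsAlgClosed.splits q).eval_eq_prod_roots z] at hz ⊢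
  have hprod := right_ne_zero_of_mul hz
  have hnorm : ‖(q.roots.map (z - ·)).prod‖ = (q.roots.map fun r => ‖z - r‖).prod :=
    (map_multiset_prod (normHom : ℂ →*₀ ℝ) _).trans (by rw [Multiset.map_map]; rfl)
  rw [norm_mul, Real.log_mul (norm_ne_zero_iff.2 (left_ne_zero_of_mul hz))
    (norm_ne_zero_iff.2 hprod), hnorm, Real.log_multiset_prod, Multiset.map_map]
  · rfl
  · intro x hx
    obtain ⟨r, hr, rfl⟩ := Multiset.mem_map.1 hx
    exact norm_ne_zero_iff.2 fun h =>
      hprod (Multiset.prod_eq_zero (Multiset.mem_map.2 ⟨r, hr, h⟩))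

lemma natDegree_inv_mul_log_norm_eval_eq {q : ℂ[X]} {z : ℂ} (hz : q.eval z ≠ 0) :
    (q.natDegree : ℝ)⁻¹ * Real.log ‖q.eval z‖ =
      (q.natDegree : ℝ)⁻¹ * Real.log ‖q.leadingCoeff‖ + logPotential (rootDist q) z := by
  rw [logPotential, integral_rootDist, log_norm_eval_eq_add_sum_log_norm_sub q hz, mul_add]

lemma ContinuousOn.exists_boundedContinuous_eqOn {X : Type*} [TopologicalSpace X] [T2Space X]
    [NormalSpace X] {s : Set X} {g : X → ℝ} (hs : IsCompact s) (hg : ContinuousOn g s) :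
    ∃ f : X →ᵇ ℝ, Set.EqOn f g s := by
  have : CompactSpace s := isCompact_iff_compactSpace.mp hs
  obtain ⟨f, -, hf⟩ := BoundedContinuousFunction.exists_norm_eq_domRestrict_eq_of_closed
    (BoundedContinuousFunction.mkOfCompact ⟨s.domRestrict g, hg.domRestrict⟩) hs.isClosed
  exact ⟨f, fun x hx => DFunLike.congr_fun hf ⟨x, hx⟩⟩

lemma exists_boundedContinuous_eqOn_log_norm_sub {R : ℝ} {z : ℂ} (hz : R < ‖z‖) :
    ∃ f : ℂ →ᵇ ℝ, Set.EqOn f (fun w => Real.log ‖z - w‖) (closedBall 0 R) := by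
  refine ContinuousOn.exists_boundedContinuous_eqOn (isCompact_closedBall 0 R) ?_
  refine (by fun_prop : Continuous fun w : ℂ => ‖z - w‖).continuousOn.log fun w hw => ?_
  rw [norm_ne_zero_iff, sub_ne_zero]
  rintro rfl
  exact (mem_closedBall_zero_iff.1 hw).not_gt hz

lemma tendsto_logPotential_rootDist {q : ℕ → ℂ[X]} {μ : Measure ℂ} {R : ℝ}
    (hroots : ∀ k, ∀ r ∈ (q k).roots, ‖r‖ ≤ R) (hμ : μ (closedBall 0 R)ᶜ = 0)
    (hws : WeakStarTendsto (fun k => rootDist (q k)) μ) {z : ℂ} (hz : R < ‖z‖) :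
    Tendsto (fun k => logPotential (rootDist (q k)) z) atTop (𝓝 (logPotential μ z)) := by
  obtain ⟨f, hf⟩ := exists_boundedContinuous_eqOn_log_norm_sub hz
  rw [logPotential, ← integral_congr_ae (eventuallyEq_of_mem (mem_ae_iff.2 hμ) hf)]
  refine (hws f).congr fun k => ?_
  rw [logPotential, integral_rootDist, integral_rootDist]
  exact congrArg _ (congrArg _ (Multiset.map_congr rfl fun r hr =>
    hf (mem_closedBall_zero_iff.2 (hroots k r hr))))

lemma abs_log_norm_sub_sub_log_norm_le {z w : ℂ} (hz : z ≠ 0) (hw : 2 * ‖w‖ ≤ ‖z‖) :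
    |Real.log ‖z - w‖ - Real.log ‖z‖| ≤ 2 * ‖w‖ / ‖z‖ := by
  have hz' : 0 < ‖z‖ := norm_pos_iff.2 hz
  have hlow : ‖z‖ - ‖w‖ ≤ ‖z - w‖ := norm_sub_norm_le z w
  have hup : ‖z - w‖ ≤ ‖z‖ + ‖w‖ := norm_sub_le z w
  have hzw : 0 < ‖z - w‖ := by linarith [norm_nonneg w]
  have hx : 0 < ‖z - w‖ / ‖z‖ := div_pos hzw hz'
  rw [← Real.log_div hzw.ne' hz'.ne', abs_le]
  constructor
  · refine le_trans ?_ (Real.one_sub_inv_le_log_of_pos hx)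
    have : ‖w‖ ≤ 2 * ‖w‖ / ‖z‖ * ‖z - w‖ := by
      rw [div_mul_eq_mul_div, le_div_iff₀ hz']
      nlinarith [norm_nonneg w]
    rw [inv_div, neg_le_sub_iff_le_add, div_le_iff₀ hzw]
    linarith
  · refine (Real.log_le_sub_one_of_pos hx).trans ?_
    rw [div_sub_one hz'.ne']
    exact div_le_div_of_nonneg_right (by linarith [norm_nonneg w]) hz'.le

lemma abs_logPotential_sub_log_norm_le {ν : Measure ℂ} [IsProbabilityMeasure ν] {R : ℝ}
    (hR : 0 ≤ R) (hν : ν (closedBall 0 R)ᶜ = 0) {z : ℂ} (hz : 2 * R < ‖z‖) :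
    |logPotential ν z - Real.log ‖z‖| ≤ 2 * R / ‖z‖ := by
  have hz0 : z ≠ 0 := norm_pos_iff.1 (by linarith)
  obtain ⟨f, hf⟩ := exists_boundedContinuous_eqOn_log_norm_sub (show R < ‖z‖ by linarith)
  have hint : Integrable (fun w => Real.log ‖z - w‖) ν :=
    (f.integrable ν).congr (eventuallyEq_of_mem (mem_ae_iff.2 hν) hf)
  have hsub : logPotential ν z - Real.log ‖z‖ = ∫ w, (Real.log ‖z - w‖ - Real.log ‖z‖) ∂ν := by
    rw [integral_sub hint (integrable_const _), integral_const, probReal_univ, one_smul,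
      logPotential]
  rw [hsub, ← Real.norm_eq_abs]
  refine (norm_integral_le_of_norm_le_const (C := 2 * R / ‖z‖) ?_).trans_eq (by simp)
  filter_upwards [mem_ae_iff.2 hν] with w hw
  have hwR : ‖w‖ ≤ R := mem_closedBall_zero_iff.1 hw
  refine (abs_log_norm_sub_sub_log_norm_le hz0 (by linarith)).trans ?_
  gcongr

lemma tendsto_logPotential_sub_log_norm {ν : Measure ℂ} [IsProbabilityMeasure ν] {R : ℝ}
    (hR : 0 ≤ R) (hν : ν (closedBall 0 R)ᶜ = 0) :
    Tendsto (fun z => logPotential ν z - Real.log ‖z‖) (cocompact ℂ) (𝓝 0) := by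
  refine squeeze_zero_norm' ?_
    ((tendsto_const_nhds (x := 2 * R)).div_atTop tendsto_norm_cocompact_atTop)
  filter_upwards [tendsto_norm_cocompact_atTop.eventually_gt_atTop (2 * R)] with z hz
  exact abs_logPotential_sub_log_norm_le hR hν hz

lemma eq_of_tendsto_forall_of_tendsto {ι β γ : Type*} [TopologicalSpace γ] [T2Space γ]
    {l : Filter ι} [l.NeBot] {l' : Filter β} [l'.NeBot] {a : ι → γ} {F : β → γ} {S : Set β}
    {c : γ} (ha : ∀ z ∈ S, Tendsto a l (𝓝 (F z))) (hF : Tendsto F l' (𝓝 c)) (hS : S ∈ l') :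
    ∀ z ∈ S, F z = c := fun z hz =>
  tendsto_nhds_unique tendsto_const_nhds <| hF.congr' <|
    eventuallyEq_of_mem hS fun y hy => tendsto_nhds_unique (ha y hy) (ha z hz)

theorem stmt_11_general (q : ℕ → Polynomial ℂ)
    (R : ℝ) (hR : 0 < R)
    (hroots : ∀ k, ∀ z : ℂ, (q k).IsRoot z → z ∈ ball (0:ℂ) R)
    (μ : Measure ℂ) [IsProbabilityMeasure μ]
    (hμsupp : μ (closedBall (0:ℂ) R)ᶜ = 0)
    (hws : WeakStarTendsto (fun k => rootDist (q k)) μ)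
    (K : Set ℂ) (hKR : K ⊆ ball (0:ℂ) R)
    (ω : Measure ℂ) (hω : IsEquilibriumMeasure K ω)
    (hconv : ∀ z : ℂ, R < ‖z‖ →
      Tendsto (fun k => ((q k).natDegree : ℝ)⁻¹
          * Real.log (‖(q k).eval z‖))
        atTop (nhds (greenFn ω z))) :
    Tendsto (fun k => ((q k).natDegree : ℝ)⁻¹
        * Real.log (‖(q k).leadingCoeff‖))
      atTop (nhds (-(logEnergy ω))) ∧
    ∀ z : ℂ, R < ‖z‖ → logPotential μ z = logPotential ω z := by
  have := hω.prob
  have hωR : ω (closedBall 0 R)ᶜ = 0 :=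
    measure_mono_null (Set.compl_subset_compl.2 (hKR.trans ball_subset_closedBall)) hω.supp
  have hroots_le : ∀ k, ∀ r ∈ (q k).roots, ‖r‖ ≤ R := fun k r hr =>
    (mem_ball_zero_iff.1 (hroots k r (isRoot_of_mem_roots hr))).le
  have hlim : ∀ z ∈ {z : ℂ | R < ‖z‖}, Tendsto (fun k => ((q k).natDegree : ℝ)⁻¹
      * Real.log ‖(q k).leadingCoeff‖) atTop (𝓝 (greenFn ω z - logPotential μ z)) := by
    intro z hz
    refine ((hconv z hz).sub (tendsto_logPotential_rootDist hroots_le hμsupp hws hz)).congr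
      fun k => ?_
    have hz0 : (q k).eval z ≠ 0 := fun h => (mem_ball_zero_iff.1 (hroots k z h)).not_gt hz
    rw [natDegree_inv_mul_log_norm_eval_eq hz0, add_sub_cancel_right]
  have hfar : Tendsto (fun z => greenFn ω z - logPotential μ z) (cocompact ℂ)
      (𝓝 (-logEnergy ω)) := by
    have := ((tendsto_logPotential_sub_log_norm hR.le hωR).sub
      (tendsto_logPotential_sub_log_norm hR.le hμsupp)).sub_const (logEnergy ω)
    rw [sub_zero, zero_sub] at this
    refine this.congr fun z => ?_
    rw [greenFn]
    ring
  have hout : {z : ℂ | R < ‖z‖} ∈ cocompact ℂ :=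
    tendsto_norm_cocompact_atTop.eventually_gt_atTop R
  have hconst := eq_of_tendsto_forall_of_tendsto hlim hfar hout
  obtain ⟨z₀, hz₀⟩ := Filter.nonempty_of_mem hout
  refine ⟨hconst z₀ hz₀ ▸ hlim z₀ hz₀, fun z hz => ?_⟩
  have := hconst z hz
  rw [greenFn] at this
  linarith

theorem stmt_11 (q : ℕ → Polynomial ℂ)
    (hdeg : Tendsto (fun k => (q k).natDegree) atTop atTop)
    (R : ℝ) (hR : 0 < R)
    (hroots : ∀ k, ∀ z : ℂ, (q k).IsRoot z → z ∈ ball (0:ℂ) R)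
    (μ : Measure ℂ) [IsProbabilityMeasure μ]
    (hμsupp : μ (closedBall (0:ℂ) R)ᶜ = 0)
    (hws : WeakStarTendsto (fun k => rootDist (q k)) μ)
    (K : Set ℂ) (hK : IsCompact K) (hnp : NonPolar K) (hKR : K ⊆ ball (0:ℂ) R)
    (ω : Measure ℂ) (hω : IsEquilibriumMeasure K ω)
    (hconv : ∀ z : ℂ, R < ‖z‖ →
      Tendsto (fun k => ((q k).natDegree : ℝ)⁻¹
          * Real.log (‖(q k).eval z‖))
        atTop (nhds (greenFn ω z))) :
    Tendsto (fun k => ((q k).natDegree : ℝ)⁻¹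
        * Real.log (‖(q k).leadingCoeff‖))
      atTop (nhds (-(logEnergy ω))) ∧
    ∀ z : ℂ, R < ‖z‖ → logPotential μ z = logPotential ω z :=
  stmt_11_general q R hR hroots μ hμsupp hws K hKR ω hω hconv
end

section
/- Let Ω_r be an open set in ℂ and q a polynomial. Suppose |q(z)| > |a| + 1 for all z ∈ ∂Ω_r and all roots of q − a and q avoid ∂Ω_r. Then q and q − a have the same number of zeros (with multiplicity) in Ω_r, provided no connected component of q⁻¹(D(0, |a|+1)) meets ∂Ω_r. -/
open MeasureTheory Metric Filter Polynomial Topology Asymptotics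
open scoped Classical ENNReal

/-! The number of zeros of `q - b` in `U`, counted with multiplicity, is locally constant in `b`
wherever no zero of `q - b` lies on `∂U`: since `q` is proper, along `bₖ → b` the root vectors of
`q - bₖ` subconverge to a root vector of `q - b`, and roots off `∂U` cannot cross it. For `b` in
the closed disk of radius `‖a‖`, a zero `z` of `q - b` has `‖q z‖ ≤ ‖a‖ < ‖a‖ + 1`, so `z` lies in
its own component of `q⁻¹(D(0, ‖a‖ + 1))`, which misses `∂Ωr`. The disk is connected, so the
counts at `b = 0` and `b = a` agree. -/

theorem eventually_mem_iff_of_notMem_frontier {X : Type*} [TopologicalSpace X] {s : Set X}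
    {x : X} (hx : x ∉ frontier s) : ∀ᶠ y in 𝓝 x, (y ∈ s ↔ x ∈ s) := by
  by_cases hxs : x ∈ s
  · filter_upwards [mem_interior_iff_mem_nhds.mp ((mem_interior_iff_notMem_frontier hxs).mpr hx)]
      with y hy
    simp [hy, hxs]
  · rw [← frontier_compl] at hx
    filter_upwards [mem_interior_iff_mem_nhds.mp ((mem_interior_iff_notMem_frontier hxs).mpr hx)]
      with y hy
    simpa [hxs] using hy

theorem eventually_card_filter_mem_eq {α X ι : Type*} [TopologicalSpace X] [Fintype ι]
    {l : Filter α} {s : Set X} {f : α → ι → X} {v : ι → X} (hf : Tendsto f l (𝓝 v))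
    (hv : ∀ i, v i ∉ frontier s) :
    ∀ᶠ k in l, (Finset.univ.filter fun i => f k i ∈ s).card
      = (Finset.univ.filter fun i => v i ∈ s).card := by
  have hmem : ∀ i, ∀ᶠ k in l, (f k i ∈ s ↔ v i ∈ s) := fun i =>
    ((continuous_apply i).tendsto v).comp hf |>.eventually
      (eventually_mem_iff_of_notMem_frontier (hv i))
  filter_upwards [eventually_all.mpr hmem] with k hk
  simp only [hk]

theorem Multiset.exists_eq_map_univ_val {α : Type*} (s : Multiset α) {n : ℕ}
    (h : Multiset.card s = n) : ∃ f : Fin n → α, s = Finset.univ.val.map f := by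
  obtain ⟨l, rfl⟩ : ∃ l : List α, s = l := ⟨s.toList, (Multiset.coe_toList s).symm⟩
  rw [Multiset.coe_card] at h
  subst h
  exact ⟨l.get, by rw [Fin.univ_val_map, List.ofFn_get]⟩

theorem Multiset.card_filter_map_univ_val {α ι : Type*} [Fintype ι] (f : ι → α) (p : α → Prop)
    [DecidablePred p] :
    ((Finset.univ.val.map f).filter p).card = (Finset.univ.filter fun i => p (f i)).card := by
  rw [Multiset.filter_map, Multiset.card_map]
  rfl

theorem Polynomial.eq_C_leadingCoeff_mul_prod {K ι : Type*} [Field K] [IsAlgClosed K]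
    [Fintype ι] {p : K[X]} {f : ι → K} (hf : p.roots = Finset.univ.val.map f) :
    p = C p.leadingCoeff * ∏ i, (X - C (f i)) := by
  conv_lhs => rw [← C_leadingCoeff_mul_prod_multiset_X_sub_C (p := p)
    IsAlgClosed.card_roots_eq_natDegree, hf, Multiset.map_map]
  rfl

theorem Polynomial.eq_C_mul_prod_X_sub_C_of_tendsto {α K ι : Type*} [Field K] [Infinite K]
    [TopologicalSpace K] [IsTopologicalRing K] [T2Space K] [Fintype ι] {l : Filter α} [l.NeBot]
    {P : α → K[X]} {p : K[X]} {c : K} {f : α → ι → K} {v : ι → K}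
    (hP : ∀ k, P k = C c * ∏ i, (X - C (f k i))) (hf : Tendsto f l (𝓝 v))
    (hp : ∀ w, Tendsto (fun k => (P k).eval w) l (𝓝 (p.eval w))) :
    p = C c * ∏ i, (X - C (v i)) := by
  refine Polynomial.funext fun w => tendsto_nhds_unique (hp w) ?_
  simp only [hP, eval_mul, eval_C, eval_prod, eval_sub, eval_X]
  exact tendsto_const_nhds.mul <| tendsto_finsetProd _ fun i _ =>
    tendsto_const_nhds.sub (((continuous_apply i).tendsto v).comp hf)

theorem Polynomial.exists_tendsto_roots_sub_C {q : ℂ[X]} (hq : 0 < q.natDegree) {s : ℕ → ℂ}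
    {b : ℂ} (hs : Tendsto s atTop (𝓝 b)) {f : ℕ → Fin q.natDegree → ℂ}
    (hf : ∀ k, (q - C (s k)).roots = Finset.univ.val.map (f k)) :
    ∃ v : Fin q.natDegree → ℂ, (q - C b).roots = Finset.univ.val.map v ∧
      ∃ φ : ℕ → ℕ, Tendsto (f ∘ φ) atTop (𝓝 v) := by
  have hdeg : 0 < q.degree := natDegree_pos_iff_degree_pos.mp hq
  have hK : IsCompact (q.eval ⁻¹' insert b (Set.range s)) :=
    (q.isProperMap_eval hdeg).isCompact_preimage hs.isCompact_insert_range
  have hfK (k : ℕ) : f k ∈ Set.univ.pi fun _ => q.eval ⁻¹' insert b (Set.range s) := by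
    intro i _
    have hi : f k i ∈ (q - C (s k)).roots := hf k ▸ Multiset.mem_map_of_mem _ (Finset.mem_univ i)
    simp [(mem_roots_sub_C hdeg).mp hi]
  obtain ⟨v, -, φ, hφ, hv⟩ := (isCompact_univ_pi fun _ => hK).tendsto_subseq hfK
  refine ⟨v, ?_, φ, hv⟩
  have hlc (x : ℂ) : (q - C x).leadingCoeff = q.leadingCoeff :=
    leadingCoeff_sub_of_degree_lt (degree_C_le.trans_lt hdeg)
  have hfac : q - C b = C q.leadingCoeff * ∏ i, (X - C (v i)) :=
    eq_C_mul_prod_X_sub_C_of_tendsto (P := fun k => q - C (s (φ k)))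
      (fun k => by rw [← hlc (s (φ k))]; exact eq_C_leadingCoeff_mul_prod (hf (φ k))) hv
      (fun w => by simpa using tendsto_const_nhds.sub (hs.comp hφ.tendsto_atTop))
  rw [hfac, roots_C_mul _ (leadingCoeff_ne_zero.mpr (ne_zero_of_natDegree_gt hq))]
  conv_rhs => rw [← roots_multiset_prod_X_sub_C (Finset.univ.val.map v), Multiset.map_map]
  rfl

theorem Polynomial.eventually_card_filter_roots_sub_C_eq {q : ℂ[X]} {U : Set ℂ} {b : ℂ}
    (hb : ∀ z ∈ frontier U, q.eval z ≠ b) :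
    ∀ᶠ x in 𝓝 b, ((q - C x).roots.filter (· ∈ U)).card
      = ((q - C b).roots.filter (· ∈ U)).card := by
  rcases Nat.eq_zero_or_pos q.natDegree with hq | hq
  · have hzero (x : ℂ) : ((q - C x).roots.filter (· ∈ U)).card = 0 :=
      Nat.eq_zero_of_le_zero <| (Multiset.card_le_card (Multiset.filter_le _ _)).trans <|
        (card_roots' _).trans (natDegree_sub_C.trans hq).le
    exact .of_forall fun x => by rw [hzero, hzero]
  choose f hf using fun x : ℂ => (q - C x).roots.exists_eq_map_univ_val
    (IsAlgClosed.card_roots_eq_natDegree.trans natDegree_sub_C)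
  by_contra hne
  obtain ⟨s, hs, hsne⟩ := frequently_iff_seq_forall.mp (not_eventually.mp hne)
  obtain ⟨v, hv, φ, hfv⟩ := exists_tendsto_roots_sub_C hq hs fun k => hf (s k)
  have hvU (i : Fin q.natDegree) : v i ∉ frontier U := fun hi =>
    hb _ hi <| (mem_roots_sub_C (natDegree_pos_iff_degree_pos.mp hq)).mp <|
      hv ▸ Multiset.mem_map_of_mem _ (Finset.mem_univ i)
  obtain ⟨k, hk⟩ := (eventually_card_filter_mem_eq hfv hvU).exists
  apply hsne (φ k)
  rw [hf (s (φ k)), hv, Multiset.card_filter_map_univ_val, Multiset.card_filter_map_univ_val]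
  exact hk

theorem Polynomial.card_filter_roots_sub_C_eq_of_isPreconnected {q : ℂ[X]} {U B : Set ℂ}
    (hB : IsPreconnected B) (hBU : ∀ b ∈ B, ∀ z ∈ frontier U, q.eval z ≠ b) {b₁ b₂ : ℂ}
    (h₁ : b₁ ∈ B) (h₂ : b₂ ∈ B) :
    ((q - C b₁).roots.filter (· ∈ U)).card = ((q - C b₂).roots.filter (· ∈ U)).card :=
  hB.constant (f := fun b => ((q - C b).roots.filter (· ∈ U)).card)
    (fun b hb => ContinuousAt.continuousWithinAt <| tendsto_nhds_of_eventually_eq <|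
      eventually_card_filter_roots_sub_C_eq (hBU b hb)) h₁ h₂

theorem stmt_13_general (Ωr : Set ℂ) (q : Polynomial ℂ) (a : ℂ)
    (hcomp : ∀ z : ℂ, ‖q.eval z‖ < ‖a‖ + 1 →
      Disjoint (connectedComponentIn
          ((fun w => q.eval w) ⁻¹' ball (0:ℂ) (‖a‖ + 1)) z)
        (frontier Ωr)) :
    ((q.roots).filter (· ∈ Ωr)).card
      = (((q - Polynomial.C a).roots).filter (· ∈ Ωr)).card := by
  have hfront : ∀ b ∈ closedBall (0 : ℂ) ‖a‖, ∀ z ∈ frontier Ωr, q.eval z ≠ b := by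
    rintro b hb z hz rfl
    have hlt : ‖q.eval z‖ < ‖a‖ + 1 := (mem_closedBall_zero_iff.mp hb).trans_lt (lt_add_one _)
    exact (hcomp z hlt).notMem_of_mem_left (mem_connectedComponentIn (by simpa using hlt)) hz
  simpa using card_filter_roots_sub_C_eq_of_isPreconnected
    (convex_closedBall 0 ‖a‖).isPreconnected hfront (mem_closedBall_self (norm_nonneg a)) (by simp)

theorem stmt_13 (Ωr : Set ℂ) (hΩ : IsOpen Ωr) (q : Polynomial ℂ) (a : ℂ)
    (hbig : ∀ z ∈ frontier Ωr, ‖a‖ + 1 < ‖q.eval z‖)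
    (hq : ∀ z ∈ frontier Ωr, ¬ q.IsRoot z)
    (hqa : ∀ z ∈ frontier Ωr, ¬ (q - Polynomial.C a).IsRoot z)
    (hcomp : ∀ z : ℂ, ‖q.eval z‖ < ‖a‖ + 1 →
      Disjoint (connectedComponentIn
          ((fun w => q.eval w) ⁻¹' ball (0:ℂ) (‖a‖ + 1)) z)
        (frontier Ωr)) :
    ((q.roots).filter (· ∈ Ωr)).card
      = (((q - Polynomial.C a).roots).filter (· ∈ Ωr)).card :=
  stmt_13_general Ωr q a hcomp
end
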